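/- The language L = { w ∈ 𝔸* : every letter occurring in w occurs at least twice in w } is not recognizable by any nondeterministic orbit-finite nominal automaton (NOFA). -/

import Mathlib

abbrev Atom := ℕ

/-- A finite renaming. -/
def IsRenaming (ρ : Atom → Atom) : Prop := ({a | ρ a ≠ a} : Set Atom).Finite

/-- A language is positive if closed under letterwise application of all finite renamings. -/
def Positive (L : Set (List Atom)) : Prop :=
  ∀ ρ : Atom → Atom, IsRenaming ρ → ∀ w ∈ L, w.map ρ ∈ L

/-- The group `Perm(𝔸)` of finite permutations, as a subgroup of `Equiv.Perm 𝔸`. -/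
def FinPerm : Subgroup (Equiv.Perm Atom) where
  carrier := {π | ({a | π a ≠ a} : Set Atom).Finite}
  one_mem' := by
    have h : {a : Atom | (1 : Equiv.Perm Atom) a ≠ a} = ∅ := by ext a; simp
    show ({a : Atom | (1 : Equiv.Perm Atom) a ≠ a} : Set Atom).Finite
    rw [h]; exact Set.finite_empty
  mul_mem' := by
    intro π σ hπ hσ
    refine Set.Finite.subset (Set.Finite.union hπ hσ) ?_
    intro a ha
    simp only [Set.mem_setOf_eq, Set.mem_union] at *
    by_contra h
    push_neg at h
    exact ha (by rw [Equiv.Perm.mul_apply, h.2, h.1])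
  inv_mem' := by
    intro π hπ
    refine Set.Finite.subset hπ ?_
    intro a ha
    simp only [Set.mem_setOf_eq] at *
    intro h
    have h2 : π⁻¹ (π a) = π⁻¹ a := congrArg _ h
    rw [show π⁻¹ (π a) = a from by simp] at h2
    exact ha h2.symm

/-- The monoid `Fin(𝔸)` of finite renamings, as a submonoid of `Function.End 𝔸`. -/
def FinRen : Submonoid (Function.End Atom) where
  carrier := {ρ | ({a | ρ a ≠ a} : Set Atom).Finite}
  one_mem' := by
    have h : {a : Atom | (1 : Function.End Atom) a ≠ a} = ∅ := by
      ext a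
      simp only [Set.mem_setOf_eq, Set.mem_empty_iff_false, iff_false, not_not]
      rfl
    show ({a : Atom | (1 : Function.End Atom) a ≠ a} : Set Atom).Finite
    rw [h]; exact Set.finite_empty
  mul_mem' := by
    intro f g hf hg
    refine Set.Finite.subset (Set.Finite.union hf hg) ?_
    intro a ha
    simp only [Set.mem_setOf_eq, Set.mem_union] at *
    by_contra h
    push_neg at h
    exact ha (by show f (g a) = a; rw [h.2, h.1])

/-- Acceptance of a word from a state. -/
def Accepts {Q : Type*} (δ : Q → Atom → Q → Prop) (F : Set Q) : Q → List Atom → Prop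
  | q, [] => q ∈ F
  | q, a :: w => ∃ q', δ q a q' ∧ Accepts δ F q' w

/-- A nondeterministic orbit-finite nominal automaton (NOFA): an orbit-finite
nominal `Perm(𝔸)`-set of states together with equivariant transitions and
equivariant sets of initial and final states. -/
structure NOFA where
  Q : Type
  smul : FinPerm → Q → Q
  one_smul : ∀ q, smul 1 q = q
  mul_smul : ∀ π σ q, smul (π * σ) q = smul π (smul σ q)
  nominal : ∀ q : Q, ∃ S : Set Atom, S.Finite ∧
    ∀ π σ : FinPerm, (∀ a ∈ S, (π : Equiv.Perm Atom) a = (σ : Equiv.Perm Atom) a) →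
      smul π q = smul σ q
  orbitFinite : Finite (Quot fun q q' : Q => ∃ π : FinPerm, smul π q = q')
  δ : Q → Atom → Q → Prop
  I : Set Q
  F : Set Q
  equiv_δ : ∀ (π : FinPerm) q a q', δ q a q' →
    δ (smul π q) ((π : Equiv.Perm Atom) a) (smul π q')
  equiv_I : ∀ (π : FinPerm), ∀ q ∈ I, smul π q ∈ I
  equiv_F : ∀ (π : FinPerm), ∀ q ∈ F, smul π q ∈ F

/-- The language of a NOFA. -/
def NOFA.lang (A : NOFA) : Set (List Atom) :=
  {w | ∃ q₀ ∈ A.I, Accepts A.δ A.F q₀ w}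

/-!
Take an accepting run on `u ++ u`, where `u` lists `m + 1` distinct atoms and `m` bounds the
supports of states. The state reached after the first `u` is supported by at most `m` atoms, so
some letter `a` of `u` is not in its support. Swapping `a` with a fresh atom `b` fixes that state,
so by equivariance the run can be continued on the swapped copy of `u`, giving an accepted word
in which `a` occurs only once.
-/

lemma accepts_append {Q : Type*} (δ : Q → Atom → Q → Prop) (F : Set Q) (q : Q)
    (u v : List Atom) :
    Accepts δ F q (u ++ v) ↔ ∃ q', Accepts δ {q'} q u ∧ Accepts δ F q' v := by
  induction u generalizing q with
  | nil => exact ⟨fun h => ⟨q, rfl, h⟩, by rintro ⟨q', rfl, h⟩; exact h⟩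
  | cons a u ih =>
    simp only [List.cons_append, Accepts, ih]
    exact ⟨fun ⟨r, hr, q', hu, hv⟩ => ⟨q', ⟨r, hr, hu⟩, hv⟩,
      fun ⟨q', ⟨r, hr, hu⟩, hv⟩ => ⟨r, hr, q', hu, hv⟩⟩

lemma List.count_map_swap_left {α : Type*} [DecidableEq α] (u : List α) (a b : α) :
    (u.map (Equiv.swap a b)).count a = u.count b := by
  simpa using u.count_map_of_injective _ (Equiv.swap a b).injective b

namespace FinPerm

def swap (a b : Atom) : FinPerm :=
  ⟨Equiv.swap a b, (Set.toFinite {a, b}).subset fun x hx => by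
    by_contra hab
    simp only [Set.mem_insert_iff, Set.mem_singleton_iff, not_or] at hab
    exact hx (Equiv.swap_apply_of_ne_of_ne hab.1 hab.2)⟩

@[simp]
lemma coe_swap (a b : Atom) : ((swap a b : FinPerm) : Equiv.Perm Atom) = Equiv.swap a b := rfl

end FinPerm

namespace NOFA

variable (A : NOFA)

def Supports (S : Finset Atom) (q : A.Q) : Prop :=
  ∀ π σ : FinPerm, (∀ a ∈ S, (π : Equiv.Perm Atom) a = (σ : Equiv.Perm Atom) a) →
    A.smul π q = A.smul σ q

variable {A}

lemma exists_supports (q : A.Q) : ∃ S : Finset Atom, A.Supports S q := by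
  obtain ⟨S, hfin, hS⟩ := A.nominal q
  exact ⟨hfin.toFinset, fun π σ h => hS π σ fun a ha => h a (hfin.mem_toFinset.mpr ha)⟩

lemma Supports.smul {S : Finset Atom} {q : A.Q} (h : A.Supports S q) (π : FinPerm) :
    A.Supports (S.image (π : Equiv.Perm Atom)) (A.smul π q) := by
  intro π' σ' hS
  rw [← A.mul_smul, ← A.mul_smul]
  exact h _ _ fun a ha => by simpa using hS _ (Finset.mem_image_of_mem _ ha)

lemma Supports.smul_eq_self {S : Finset Atom} {q : A.Q} (h : A.Supports S q) {π : FinPerm}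
    (hπ : ∀ a ∈ S, (π : Equiv.Perm Atom) a = a) : A.smul π q = q :=
  (h π 1 hπ).trans (A.one_smul q)

variable (A)

def OrbitRel (q q' : A.Q) : Prop := ∃ π : FinPerm, A.smul π q = q'

lemma orbitRel_equivalence : Equivalence A.OrbitRel where
  refl q := ⟨1, A.one_smul q⟩
  symm := by
    rintro q _ ⟨π, rfl⟩
    exact ⟨π⁻¹, by rw [← A.mul_smul, inv_mul_cancel, A.one_smul]⟩
  trans := by
    rintro q _ _ ⟨π, rfl⟩ ⟨σ, rfl⟩
    exact ⟨σ * π, A.mul_smul σ π q⟩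

/-- Supports transport along orbits, so one support per orbit bounds them all. -/
lemma exists_supports_card_le : ∃ m : ℕ, ∀ q : A.Q, ∃ S : Finset Atom,
    A.Supports S q ∧ S.card ≤ m := by
  have : Finite (Quot A.OrbitRel) := A.orbitFinite
  choose S hS using fun q : A.Q => exists_supports q
  obtain ⟨m, hm⟩ := (Set.finite_range fun c : Quot A.OrbitRel => (S c.out).card).bddAbove
  refine ⟨m, fun q => ?_⟩
  obtain ⟨π, hπ⟩ := A.orbitRel_equivalence.eqvGen_iff.mp (Quot.eq.mp (Quot.out_eq (Quot.mk _ q)))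
  exact ⟨_, hπ ▸ (hS _).smul π, Finset.card_image_le.trans (hm ⟨_, rfl⟩)⟩

lemma accepts_smul (π : FinPerm) {F : Set A.Q} (hF : ∀ q ∈ F, A.smul π q ∈ F) {q : A.Q}
    {w : List Atom} (h : Accepts A.δ F q w) :
    Accepts A.δ F (A.smul π q) (w.map (π : Equiv.Perm Atom)) := by
  induction w generalizing q with
  | nil => exact hF q h
  | cons a w ih =>
    obtain ⟨r, hδ, h⟩ := h
    exact ⟨A.smul π r, A.equiv_δ π q a r hδ, ih h⟩

lemma exists_card_le_append_map_mem_lang : ∃ m : ℕ, ∀ u v : List Atom, u ++ v ∈ A.lang →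
    ∃ S : Finset Atom, S.card ≤ m ∧ ∀ π : FinPerm, (∀ a ∈ S, (π : Equiv.Perm Atom) a = a) →
      u ++ v.map (π : Equiv.Perm Atom) ∈ A.lang := by
  obtain ⟨m, hm⟩ := A.exists_supports_card_le
  refine ⟨m, fun u v ⟨q₀, hq₀, huv⟩ => ?_⟩
  obtain ⟨q, hu, hv⟩ := (accepts_append _ _ _ u v).mp huv
  obtain ⟨S, hS, hcard⟩ := hm q
  refine ⟨S, hcard, fun π hπ => ⟨q₀, hq₀, (accepts_append _ _ _ _ _).mpr ⟨q, hu, ?_⟩⟩⟩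
  simpa only [hS.smul_eq_self hπ] using A.accepts_smul π (A.equiv_F π) hv

end NOFA

/-- the language of all words in which every occurring letter
occurs at least twice is not NOFA-recognizable. -/
theorem twice_lang_not_nofa_recognizable :
    ¬ ∃ A : NOFA, A.lang = {w : List Atom | ∀ a ∈ w, 2 ≤ w.count a} := by
  rintro ⟨A, hA⟩
  obtain ⟨m, hm⟩ := A.exists_card_le_append_map_mem_lang
  set u := List.range (m + 1)
  have count_u {a} (ha : a ∈ u) : u.count a = 1 := List.count_eq_one_of_mem List.nodup_range ha
  have huu : u ++ u ∈ A.lang := hA ▸ fun a ha => by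
    rw [List.count_append, count_u ((List.mem_append.mp ha).elim id id)]
  obtain ⟨S, hS, hmap⟩ := hm u u huu
  obtain ⟨a, hau, haS⟩ : ∃ a ∈ u.toFinset, a ∉ S :=
    Finset.exists_mem_notMem_of_card_lt_card (by
      rw [List.toFinset_card_of_nodup List.nodup_range, List.length_range]; omega)
  obtain ⟨b, hb⟩ := Infinite.exists_notMem_finset (S ∪ u.toFinset)
  have hfix : ∀ c ∈ S, Equiv.swap a b c = c := fun c hc =>
    Equiv.swap_apply_of_ne_of_ne (by rintro rfl; exact haS hc)
      (by rintro rfl; exact hb (Finset.mem_union_left _ hc))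
  have hbu : u.count b = 0 :=
    List.count_eq_zero.mpr fun h => hb (Finset.mem_union_right _ (List.mem_toFinset.mpr h))
  have hau : a ∈ u := List.mem_toFinset.mp hau
  have hswap := hA ▸ hmap (FinPerm.swap a b) (by simpa using hfix)
  have := hswap a (List.mem_append_left _ hau)
  rw [List.count_append, count_u hau, FinPerm.coe_swap, List.count_map_swap_left, hbu] at this
  omega
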